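/- Let k^{bc} be a Killing 2-tensor on ℝ^n. Then the double divergence ∂_r ∂_s k^{rs} is a constant function on ℝ^n. -/

import Mathlib

noncomputable section

/-- Partial derivative `∂_a f` in the `a`-th coordinate direction on `ℝⁿ`. -/
def pd {n : ℕ} (a : Fin n) (f : (Fin n → ℝ) → ℝ) : (Fin n → ℝ) → ℝ :=
  fun x => fderiv ℝ f x (Pi.single a 1)

/-- Raised partial derivative `∂^a f = g^{ab} ∂_b f`. -/
def pdUp {n : ℕ} (ginv : Matrix (Fin n) (Fin n) ℝ) (a : Fin n)
    (f : (Fin n → ℝ) → ℝ) : (Fin n → ℝ) → ℝ :=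
  fun x => ∑ b, ginv a b * pd b f x

/-- Laplace operator `Δ f = g^{ab} ∂_a ∂_b f`. -/
def lap {n : ℕ} (ginv : Matrix (Fin n) (Fin n) ℝ) (f : (Fin n → ℝ) → ℝ) :
    (Fin n → ℝ) → ℝ :=
  fun x => ∑ a, ∑ b, ginv a b * pd a (pd b f) x

/-- Iterated partial derivative `∂_{i 0} ⋯ ∂_{i (m-1)} f` along a tuple of indices. -/
def pdIter {n : ℕ} : (m : ℕ) → (Fin m → Fin n) → ((Fin n → ℝ) → ℝ) → ((Fin n → ℝ) → ℝ)
  | 0, _, f => f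
  | m + 1, i, f => pd (i 0) (pdIter m (fun j => i j.succ) f)

/-- A (smooth, totally symmetric) Killing `ℓ`-tensor: `∂^{(a₀} k^{a₁…a_ℓ)} = 0`. -/
def IsKillingTensor {n : ℕ} (ginv : Matrix (Fin n) (Fin n) ℝ) (ℓ : ℕ)
    (k : (Fin ℓ → Fin n) → (Fin n → ℝ) → ℝ) : Prop :=
  (∀ i, ContDiff ℝ (⊤ : ℕ∞) (k i)) ∧
  (∀ (σ : Equiv.Perm (Fin ℓ)) (i : Fin ℓ → Fin n), k (i ∘ σ) = k i) ∧
  (∀ (i : Fin (ℓ + 1) → Fin n) (x : Fin n → ℝ),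
    ∑ σ : Equiv.Perm (Fin (ℓ + 1)),
      pdUp ginv (i (σ 0)) (k (fun j => i (σ j.succ))) x = 0)

end

/-!
Write `t = g_{ab} k^{ab}` for the trace, `v^a = ∂_b k^{ba}` for the divergence and
`D = ∂_r ∂_s k^{rs}` for the double divergence. Contracting the Killing equation with `g_{ab}`
gives `∂^a t = -2 v^a`, and taking one more divergence gives `Δ t = -2 D`. Applying `∂_b ∂_c` to
the Killing equation and contracting instead gives `∂^a D = -2 Δ v^a`. Since `Δ` and `∂^a` commute,
`∂^a D = -2 Δ v^a = Δ ∂^a t = ∂^a Δ t = -2 ∂^a D`, so `∂^a D = 0`; as `g^{ab}` is invertible,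
all partial derivatives of `D` vanish.
-/

open scoped ContDiff Matrix

variable {n : ℕ}

section PartialDerivative

@[fun_prop]
theorem ContDiff.pd {f : (Fin n → ℝ) → ℝ} (hf : ContDiff ℝ ∞ f) (a : Fin n) :
    ContDiff ℝ ∞ (pd a f) :=
  (hf.fderiv_right le_rfl).clm_apply contDiff_const

theorem pd_const (c : ℝ) (a : Fin n) : pd a (fun _ => c) = fun _ => 0 := by
  funext x; simp [pd]

theorem pd_add {f h : (Fin n → ℝ) → ℝ} (hf : Differentiable ℝ f) (hh : Differentiable ℝ h)
    (a : Fin n) : pd a (fun x => f x + h x) = fun x => pd a f x + pd a h x := by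
  funext x; simp [pd, fderiv_fun_add (hf x) (hh x)]

theorem pd_const_mul {f : (Fin n → ℝ) → ℝ} (hf : Differentiable ℝ f) (c : ℝ) (a : Fin n) :
    pd a (fun x => c * f x) = fun x => c * pd a f x := by
  funext x; simp [pd, fderiv_const_mul (hf x)]

theorem pd_sum {ι : Type*} {s : Finset ι} {f : ι → (Fin n → ℝ) → ℝ}
    (hf : ∀ i ∈ s, Differentiable ℝ (f i)) (a : Fin n) :
    pd a (fun x => ∑ i ∈ s, f i x) = fun x => ∑ i ∈ s, pd a (f i) x := by
  funext x; simp [pd, fderiv_fun_sum (fun i hi => hf i hi x)]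

theorem pd_comm {f : (Fin n → ℝ) → ℝ} (hf : ContDiff ℝ 2 f) (a b : Fin n) :
    pd a (pd b f) = pd b (pd a f) := by
  funext x
  have hf' : Differentiable ℝ (fderiv ℝ f) :=
    (hf.fderiv_right (m := 1) (by norm_num)).differentiable one_ne_zero
  have hpd : ∀ u v, pd u (pd v f) x =
      fderiv ℝ (fderiv ℝ f) x (Pi.single u 1) (Pi.single v 1) := by
    intro u v
    change fderiv ℝ (fun y => fderiv ℝ f y (Pi.single v 1)) x (Pi.single u 1) = _
    rw [fderiv_clm_apply (hf' x) (differentiableAt_const _)]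
    simp
  rw [hpd, hpd]
  exact hf.contDiffAt.isSymmSndFDerivAt (by simp) _ _

theorem is_const_of_pd_eq_zero {f : (Fin n → ℝ) → ℝ} (hf : Differentiable ℝ f)
    (h : ∀ a x, pd a f x = 0) (x y : Fin n → ℝ) : f x = f y := by
  refine is_const_of_fderiv_eq_zero hf (fun z => ?_) x y
  refine ContinuousLinearMap.coe_injective (LinearMap.pi_ext fun a t => ?_)
  rw [← mul_one t, ← smul_eq_mul, Pi.single_smul']
  have hz : fderiv ℝ f z (Pi.single a 1) = 0 := h a z
  simp [hz]

end PartialDerivative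

section RaisedDerivative

variable {g ginv : Matrix (Fin n) (Fin n) ℝ}

@[fun_prop]
theorem ContDiff.pdUp {f : (Fin n → ℝ) → ℝ} (hf : ContDiff ℝ ∞ f) (a : Fin n) :
    ContDiff ℝ ∞ (pdUp ginv a f) :=
  ContDiff.sum fun b _ => contDiff_const.mul (hf.pd b)

theorem sum_mul_pdUp (h : gᵀ * ginv = 1) (f : (Fin n → ℝ) → ℝ) (b : Fin n) (x : Fin n → ℝ) :
    ∑ a, g a b * pdUp ginv a f x = pd b f x := by
  have hδ : ∀ d, ∑ a, g a b * ginv a d = if b = d then 1 else 0 := fun d => by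
    simpa [Matrix.mul_apply, Matrix.one_apply] using congrFun (congrFun h b) d
  simp only [pdUp, Finset.mul_sum]
  rw [Finset.sum_comm]
  simp [← mul_assoc, ← Finset.sum_mul, hδ]

theorem pdUp_const_mul {f : (Fin n → ℝ) → ℝ} (hf : Differentiable ℝ f) (c : ℝ) (a : Fin n) :
    pdUp ginv a (fun x => c * f x) = fun x => c * pdUp ginv a f x := by
  funext x
  simp only [pdUp, pd_const_mul hf, Finset.mul_sum, mul_left_comm]

theorem pdUp_sum {ι : Type*} {s : Finset ι} {f : ι → (Fin n → ℝ) → ℝ}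
    (hf : ∀ i ∈ s, Differentiable ℝ (f i)) (a : Fin n) :
    pdUp ginv a (fun x => ∑ i ∈ s, f i x) = fun x => ∑ i ∈ s, pdUp ginv a (f i) x := by
  funext x
  simp only [pdUp, pd_sum hf, Finset.mul_sum]
  exact Finset.sum_comm

theorem pd_pdUp {f : (Fin n → ℝ) → ℝ} (hf : ∀ c, Differentiable ℝ (pd c f)) (a b : Fin n) :
    pd b (pdUp ginv a f) = fun x => ∑ c, ginv a c * pd b (pd c f) x := by
  unfold pdUp
  rw [pd_sum fun c _ => (hf c).const_mul _]
  simp only [pd_const_mul (hf _)]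

theorem pd_pdUp_comm {f : (Fin n → ℝ) → ℝ} (hf : ContDiff ℝ ∞ f) (a b : Fin n) :
    pd b (pdUp ginv a f) = pdUp ginv a (pd b f) := by
  have hf2 : ContDiff ℝ 2 f := hf.of_le (by norm_cast)
  rw [pd_pdUp (fun c => (hf.pd c).differentiable (by simp))]
  funext x
  exact Finset.sum_congr rfl fun c _ => by rw [pd_comm hf2]

theorem sum_pd_pdUp {f : (Fin n → ℝ) → ℝ} (hf : ∀ c, Differentiable ℝ (pd c f)) (x : Fin n → ℝ) :
    ∑ a, pd a (pdUp ginv a f) x = lap ginv f x := by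
  simp only [pd_pdUp hf]
  rfl

theorem lap_const_mul {f : (Fin n → ℝ) → ℝ} (hf : ContDiff ℝ ∞ f) (c : ℝ) :
    lap ginv (fun x => c * f x) = fun x => c * lap ginv f x := by
  funext x
  simp only [lap, pd_const_mul (hf.differentiable (by simp)),
    pd_const_mul ((hf.pd _).differentiable (by simp)), Finset.mul_sum, mul_left_comm]

theorem lap_pdUp_comm {f : (Fin n → ℝ) → ℝ} (hf : ContDiff ℝ ∞ f) (a : Fin n) :
    lap ginv (pdUp ginv a f) = pdUp ginv a (lap ginv f) := by
  have hpdpd : ∀ p q, pd p (pd q (pdUp ginv a f)) = pdUp ginv a (pd p (pd q f)) := fun p q => by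
    rw [pd_pdUp_comm hf, pd_pdUp_comm (hf.pd q)]
  have hdiff : ∀ p q, Differentiable ℝ (pd p (pd q f)) := fun p q =>
    ((hf.pd q).pd p).differentiable (by simp)
  funext x
  unfold lap
  rw [pdUp_sum fun p _ => by fun_prop (disch := simp)]
  simp only [hpdpd, pdUp_sum fun q _ => (hdiff _ q).const_mul _, pdUp_const_mul (hdiff _ _)]

theorem sum_pd_pd_pdUp {F : Fin n → (Fin n → ℝ) → ℝ}
    (hF : ∀ c, ContDiff ℝ ∞ (F c)) (x : Fin n → ℝ) :
    ∑ b, ∑ c, pd b (pd c (pdUp ginv b (F c))) x = lap ginv (fun y => ∑ c, pd c (F c) y) x := by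
  rw [← sum_pd_pdUp (fun b => by fun_prop (disch := simp))]
  refine Finset.sum_congr rfl fun b _ => ?_
  rw [pdUp_sum fun c _ => ((hF c).pd c).differentiable (by simp),
    pd_sum fun c _ => by fun_prop (disch := simp)]
  simp only [pd_pdUp_comm (hF _)]

end RaisedDerivative

section KillingTensor

variable {g ginv : Matrix (Fin n) (Fin n) ℝ} {k : Fin n → Fin n → (Fin n → ℝ) → ℝ}

noncomputable def divergence (k : Fin n → Fin n → (Fin n → ℝ) → ℝ) (c : Fin n) :
    (Fin n → ℝ) → ℝ :=
  fun x => ∑ b, pd b (k b c) x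

noncomputable def doubleDivergence (k : Fin n → Fin n → (Fin n → ℝ) → ℝ) : (Fin n → ℝ) → ℝ :=
  fun x => ∑ r, ∑ s, pd r (pd s (k r s)) x

noncomputable def metricTrace (g : Matrix (Fin n) (Fin n) ℝ)
    (k : Fin n → Fin n → (Fin n → ℝ) → ℝ) : (Fin n → ℝ) → ℝ :=
  fun x => ∑ a, ∑ b, g a b * k a b x

theorem contDiff_divergence (hk : ∀ b c, ContDiff ℝ ∞ (k b c)) (c : Fin n) :
    ContDiff ℝ ∞ (divergence k c) := by
  unfold divergence; fun_prop

theorem contDiff_doubleDivergence (hk : ∀ b c, ContDiff ℝ ∞ (k b c)) :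
    ContDiff ℝ ∞ (doubleDivergence k) := by
  unfold doubleDivergence; fun_prop

theorem contDiff_metricTrace (hk : ∀ b c, ContDiff ℝ ∞ (k b c)) :
    ContDiff ℝ ∞ (metricTrace g k) := by
  unfold metricTrace; fun_prop

theorem sum_pd_divergence (hk : ∀ b c, ContDiff ℝ ∞ (k b c)) (hsymk : ∀ b c, k b c = k c b)
    (x : Fin n → ℝ) : ∑ c, pd c (divergence k c) x = doubleDivergence k x := by
  unfold divergence
  simp only [pd_sum fun b _ => ((hk b _).pd b).differentiable (by simp)]
  exact Finset.sum_congr rfl fun c _ => Finset.sum_congr rfl fun b _ => by rw [hsymk]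

theorem pdUp_metricTrace (hg : g.IsSymm) (hginv : g * ginv = 1)
    (hk : ∀ b c, ContDiff ℝ ∞ (k b c)) (hsymk : ∀ b c, k b c = k c b)
    (hkill : ∀ a b c x, pdUp ginv a (k b c) x + pdUp ginv b (k c a) x + pdUp ginv c (k a b) x = 0)
    (c : Fin n) : pdUp ginv c (metricTrace g k) = fun x => -2 * divergence k c x := by
  funext x
  have hgT : gᵀ * ginv = 1 := by rw [hg.eq]; exact hginv
  have hcontract : ∑ a, ∑ b, g a b *
      (pdUp ginv a (k b c) x + pdUp ginv b (k c a) x + pdUp ginv c (k a b) x) = 0 := by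
    simp [hkill]
  have h1 : ∑ a, ∑ b, g a b * pdUp ginv a (k b c) x = divergence k c x := by
    rw [Finset.sum_comm]
    exact Finset.sum_congr rfl fun b _ => sum_mul_pdUp hgT _ b x
  have h2 : ∑ a, ∑ b, g a b * pdUp ginv b (k c a) x = divergence k c x := by
    refine Finset.sum_congr rfl fun a _ => ?_
    rw [← sum_mul_pdUp hgT]
    exact Finset.sum_congr rfl fun b _ => by rw [hg.apply, hsymk]
  have h3 : ∑ a, ∑ b, g a b * pdUp ginv c (k a b) x = pdUp ginv c (metricTrace g k) x := by
    unfold metricTrace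
    rw [pdUp_sum fun a _ => by fun_prop (disch := simp)]
    simp only [pdUp_sum fun b _ => ((hk _ b).differentiable (by simp)).const_mul _,
      pdUp_const_mul ((hk _ _).differentiable (by simp))]
  simp only [mul_add, Finset.sum_add_distrib, h1, h2, h3] at hcontract
  linarith

theorem lap_metricTrace (hg : g.IsSymm) (hginv : g * ginv = 1)
    (hk : ∀ b c, ContDiff ℝ ∞ (k b c)) (hsymk : ∀ b c, k b c = k c b)
    (hkill : ∀ a b c x, pdUp ginv a (k b c) x + pdUp ginv b (k c a) x + pdUp ginv c (k a b) x = 0) :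
    lap ginv (metricTrace g k) = fun x => -2 * doubleDivergence k x := by
  funext x
  rw [← sum_pd_pdUp fun c => ((contDiff_metricTrace hk).pd c).differentiable (by simp)]
  simp only [pdUp_metricTrace hg hginv hk hsymk hkill,
    pd_const_mul ((contDiff_divergence hk _).differentiable (by simp)), ← Finset.mul_sum,
    sum_pd_divergence hk hsymk]

theorem pdUp_doubleDivergence (hk : ∀ b c, ContDiff ℝ ∞ (k b c))
    (hsymk : ∀ b c, k b c = k c b)
    (hkill : ∀ a b c x, pdUp ginv a (k b c) x + pdUp ginv b (k c a) x + pdUp ginv c (k a b) x = 0)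
    (a : Fin n) : pdUp ginv a (doubleDivergence k) = fun x => -2 * lap ginv (divergence k a) x := by
  funext x
  have hthird : ∀ b c, pd b (pd c (pdUp ginv a (k b c))) x + pd b (pd c (pdUp ginv b (k c a))) x
      + pd b (pd c (pdUp ginv c (k a b))) x = 0 := by
    intro b c
    have hzero : (fun y => pdUp ginv a (k b c) y + pdUp ginv b (k c a) y
        + pdUp ginv c (k a b) y) = fun _ => 0 := funext (hkill a b c)
    simpa (disch := fun_prop (disch := simp)) only [pd_const, pd_add]
      using congrArg (fun F => pd b (pd c F) x) hzero
  have h1 : ∑ b, ∑ c, pd b (pd c (pdUp ginv a (k b c))) x = pdUp ginv a (doubleDivergence k) x := by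
    unfold doubleDivergence
    rw [pdUp_sum fun b _ => by fun_prop (disch := simp)]
    simp only [pdUp_sum fun c _ => (((hk _ c).pd c).pd _).differentiable (by simp),
      pd_pdUp_comm (hk _ _), pd_pdUp_comm ((hk _ _).pd _)]
  have h2 : ∑ b, ∑ c, pd b (pd c (pdUp ginv b (k c a))) x = lap ginv (divergence k a) x :=
    sum_pd_pd_pdUp (fun c => hk c a) x
  have h3 : ∑ b, ∑ c, pd b (pd c (pdUp ginv c (k a b))) x = lap ginv (divergence k a) x := by
    rw [Finset.sum_comm]
    refine Eq.trans (Finset.sum_congr rfl fun c _ => Finset.sum_congr rfl fun b _ => ?_)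
      (sum_pd_pd_pdUp (fun b => hk b a) x)
    rw [pd_comm ((((hk a b).pdUp c).of_le (by norm_cast))), hsymk]
  have hsum := Finset.sum_eq_zero fun b (_ : b ∈ Finset.univ) =>
    Finset.sum_eq_zero fun c (_ : c ∈ Finset.univ) => hthird b c
  simp only [Finset.sum_add_distrib, h1, h2, h3] at hsum
  linarith

theorem pdUp_doubleDivergence_eq_zero (hg : g.IsSymm) (hginv : g * ginv = 1)
    (hk : ∀ b c, ContDiff ℝ ∞ (k b c)) (hsymk : ∀ b c, k b c = k c b)
    (hkill : ∀ a b c x, pdUp ginv a (k b c) x + pdUp ginv b (k c a) x + pdUp ginv c (k a b) x = 0)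
    (a : Fin n) (x : Fin n → ℝ) : pdUp ginv a (doubleDivergence k) x = 0 := by
  have hcomm := congrFun (lap_pdUp_comm (ginv := ginv) (contDiff_metricTrace (g := g) hk) a) x
  rw [pdUp_metricTrace hg hginv hk hsymk hkill, lap_metricTrace hg hginv hk hsymk hkill,
    lap_const_mul (contDiff_divergence hk a),
    pdUp_const_mul ((contDiff_doubleDivergence hk).differentiable (by simp))] at hcomm
  rw [pdUp_doubleDivergence hk hsymk hkill] at hcomm ⊢
  linarith

end KillingTensor

theorem stmt13_general {n : ℕ}
    (g ginv : Matrix (Fin n) (Fin n) ℝ) (hgsym : g.IsSymm) (hginv : g * ginv = 1)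
    (k : Fin n → Fin n → (Fin n → ℝ) → ℝ)
    (hsmooth : ∀ b c, ContDiff ℝ (⊤ : ℕ∞) (k b c))
    (hsymk : ∀ b c, k b c = k c b)
    (hkill : ∀ (a b c : Fin n) (x : Fin n → ℝ),
      pdUp ginv a (k b c) x + pdUp ginv b (k c a) x + pdUp ginv c (k a b) x = 0) :
    ∃ C : ℝ, ∀ x : Fin n → ℝ, (∑ r, ∑ s, pd r (pd s (k r s)) x) = C := by
  have hgT : gᵀ * ginv = 1 := by rw [hgsym.eq]; exact hginv
  have hpd : ∀ r x, pd r (doubleDivergence k) x = 0 := fun r x => by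
    rw [← sum_mul_pdUp hgT]
    simp [pdUp_doubleDivergence_eq_zero hgsym hginv hsmooth hsymk hkill]
  exact ⟨doubleDivergence k 0, fun x =>
    is_const_of_pd_eq_zero ((contDiff_doubleDivergence hsmooth).differentiable (by simp)) hpd x 0⟩

/-- for a Killing 2-tensor `k` on `ℝⁿ`, the double divergence
`∂_r ∂_s k^{rs}` is a constant function. -/
theorem stmt13 {n : ℕ} (hn : 0 < n)
    (g ginv : Matrix (Fin n) (Fin n) ℝ) (hgsym : g.IsSymm) (hginv : g * ginv = 1)
    (k : Fin n → Fin n → (Fin n → ℝ) → ℝ)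
    (hsmooth : ∀ b c, ContDiff ℝ (⊤ : ℕ∞) (k b c))
    (hsymk : ∀ b c, k b c = k c b)
    (hkill : ∀ (a b c : Fin n) (x : Fin n → ℝ),
      pdUp ginv a (k b c) x + pdUp ginv b (k c a) x + pdUp ginv c (k a b) x = 0) :
    ∃ C : ℝ, ∀ x : Fin n → ℝ, (∑ r, ∑ s, pd r (pd s (k r s)) x) = C :=
  stmt13_general g ginv hgsym hginv k hsmooth hsymk hkill
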